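/- Let R have characteristic 2 and let A be the nilpotent Matsuo algebra of a Fischer space. Then for every point x of the Fischer space, the left multiplication operator ad_x : A → A, b ↦ x·b, satisfies ad_x² = 0. -/

import Mathlib

/-- A partial triple system, given by a collinearity relation `col` and a map `third`
sending two distinct collinear points to the third point on their line. -/
structure IsPTS {P : Type*} (col : P → P → Prop) (third : P → P → P) : Prop where
  symm : ∀ x y, col x y → col y x
  irrefl : ∀ x, ¬ col x x
  third_symm : ∀ x y, col x y → third x y = third y x
  col_third : ∀ x y, col x y → col x (third x y)
  third_ne_left : ∀ x y, col x y → third x y ≠ x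
  third_ne_right : ∀ x y, col x y → third x y ≠ y
  third_third : ∀ x y, col x y → third x (third x y) = y
  unique_line : ∀ x y u v, col x y → col u v →
    x ∈ ({u, v, third u v} : Set P) → y ∈ ({u, v, third u v} : Set P) →
    ({x, y, third x y} : Set P) = {u, v, third u v}

/-- A subspace of a partial triple system: a set of points closed under taking
the third point of a line through two of its points. -/
def IsSubspace {P : Type*} (col : P → P → Prop) (third : P → P → P) (S : Set P) : Prop :=
  ∀ x ∈ S, ∀ y ∈ S, col x y → third x y ∈ S

/-- The subspace generated by a set of points. -/
def fclosure {P : Type*} (col : P → P → Prop) (third : P → P → P) (T : Set P) : Set P :=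
  ⋂₀ {S | T ⊆ S ∧ IsSubspace col third S}

/-- The line through two distinct collinear points, as a set. -/
def lineSet {P : Type*} (third : P → P → P) (x y : P) : Set P := {x, y, third x y}

/-- The six points of the complete quadrilateral (dual affine plane of order 2). -/
inductive CQPt | A | B | C | X | Y | Z
deriving DecidableEq

/-- The "opposite point" involution of the complete quadrilateral. -/
def CQPt.opp : CQPt → CQPt
  | .A => .X | .X => .A | .B => .Y | .Y => .B | .C => .Z | .Z => .C

/-- Collinearity in the complete quadrilateral with lines
{A,B,C}, {A,Y,Z}, {B,X,Z}, {C,X,Y}: two points are collinear iff they are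
distinct and not opposite. -/
def CQPt.col (p q : CQPt) : Prop := p ≠ q ∧ q ≠ p.opp

/-- The third point on the line through two distinct collinear points of the
complete quadrilateral. -/
def CQPt.third : CQPt → CQPt → CQPt
  | .A, .B => .C | .B, .A => .C | .A, .C => .B | .C, .A => .B | .B, .C => .A | .C, .B => .A
  | .A, .Y => .Z | .Y, .A => .Z | .A, .Z => .Y | .Z, .A => .Y | .Y, .Z => .A | .Z, .Y => .A
  | .B, .X => .Z | .X, .B => .Z | .B, .Z => .X | .Z, .B => .X | .X, .Z => .B | .Z, .X => .B
  | .C, .X => .Y | .X, .C => .Y | .C, .Y => .X | .Y, .C => .X | .X, .Y => .C | .Y, .X => .C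
  | p, _ => p

/-- A set of points is a complete quadrilateral if it is the isomorphic image of
the standard one (preserving collinearity and the `third` operation). -/
def IsCQSet {P : Type*} (col : P → P → Prop) (third : P → P → P) (S : Set P) : Prop :=
  ∃ f : CQPt → P, Function.Injective f ∧ Set.range f = S ∧
    (∀ u v, col (f u) (f v) ↔ CQPt.col u v) ∧
    (∀ u v, CQPt.col u v → f (CQPt.third u v) = third (f u) (f v))

/-- A set of points is an affine plane of order 3 if it is the isomorphic image of
`AG(2,3)` (any two distinct points collinear, third point `-(u+v)`). -/
def IsAPSet {P : Type*} (col : P → P → Prop) (third : P → P → P) (S : Set P) : Prop :=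
  ∃ f : ZMod 3 × ZMod 3 → P, Function.Injective f ∧ Set.range f = S ∧
    (∀ u v, col (f u) (f v) ↔ u ≠ v) ∧
    (∀ u v, u ≠ v → f (-(u + v)) = third (f u) (f v))

/-- A Fischer space: a partial triple system in which the subspace generated by two
distinct intersecting lines is a complete quadrilateral or an affine plane of order 3. -/
structure IsFischer {P : Type*} (col : P → P → Prop) (third : P → P → P)
    extends IsPTS col third : Prop where
  dichotomy : ∀ x y u v, col x y → col u v →
    lineSet third x y ≠ lineSet third u v →
    (lineSet third x y ∩ lineSet third u v).Nonempty →
    IsCQSet col third (fclosure col third (lineSet third x y ∪ lineSet third u v)) ∨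
    IsAPSet col third (fclosure col third (lineSet third x y ∪ lineSet third u v))

/-- A Fischer space of symplectic type: the subspace generated by two distinct
intersecting lines is always a complete quadrilateral. -/
structure IsSymplectic {P : Type*} (col : P → P → Prop) (third : P → P → P)
    extends IsPTS col third : Prop where
  cq : ∀ x y u v, col x y → col u v →
    lineSet third x y ≠ lineSet third u v →
    (lineSet third x y ∩ lineSet third u v).Nonempty →
    IsCQSet col third (fclosure col third (lineSet third x y ∪ lineSet third u v))

/-- `A` is the nilpotent Matsuo algebra (char 2) of the geometry `(col, third)`,
with `e` the natural basis indexed by the points. -/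
structure IsNilMatsuo (R : Type*) {A P : Type*} [CommRing R] [NonUnitalNonAssocCommRing A]
    [Module R A] (col : P → P → Prop) (third : P → P → P) (e : P → A) : Prop where
  char2 : (2 : R) = 0
  mul_same : ∀ p, e p * e p = 0
  mul_of_not_col : ∀ p q, p ≠ q → ¬ col p q → e p * e q = 0
  mul_of_col : ∀ p q, p ≠ q → col p q → e p * e q = e p + e q + e (third p q)


/-!
For a point `x` collinear with `y`, the line through them is also the line through `x` and
`t = x ∧ y`, so `x·y = x + y + t = x·t`. Hence `x·(x·y) = x·x + x·y + x·t = 2 (x·y) = 0` in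
characteristic 2, while `x·(x·y) = 0` trivially when `y = x` or `y ≁ x`.
-/

namespace IsPTS

variable {P : Type*} {col : P → P → Prop} {third : P → P → P}

theorem ne_of_col (hP : IsPTS col third) {x y : P} (h : col x y) : x ≠ y :=
  fun hxy => hP.irrefl x (hxy ▸ h)

end IsPTS

namespace IsNilMatsuo

variable {R A P : Type*} [CommRing R] [NonUnitalNonAssocCommRing A] [Module R A]
  {col : P → P → Prop} {third : P → P → P} {e : P → A}

theorem add_self_eq_zero (hM : IsNilMatsuo R col third e) (a : A) : a + a = 0 := by
  rw [← two_smul R a, hM.char2, zero_smul]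

theorem mul_third_eq_mul (hM : IsNilMatsuo R col third e) (hP : IsPTS col third) {x y : P}
    (h : col x y) : e x * e (third x y) = e x * e y := by
  have hxt := hP.col_third x y h
  rw [hM.mul_of_col x _ (hP.ne_of_col hxt) hxt, hP.third_third x y h,
    hM.mul_of_col x y (hP.ne_of_col h) h]
  abel

theorem mul_mul_left_eq_zero (hM : IsNilMatsuo R col third e) (hP : IsPTS col third) (x y : P) :
    e x * (e x * e y) = 0 := by
  by_cases hxy : x = y
  · rw [hxy, hM.mul_same, mul_zero]
  by_cases h : col x y
  · rw [hM.mul_of_col x y hxy h, mul_add, mul_add, hM.mul_same, zero_add,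
      hM.mul_third_eq_mul hP h, hM.add_self_eq_zero]
  · rw [hM.mul_of_not_col x y hxy h, mul_zero]

end IsNilMatsuo

/-- In the nilpotent Matsuo algebra of a Fischer space over a commutative ring of
characteristic 2, left multiplication by any point satisfies `ad_x ^ 2 = 0`. -/
theorem stmt2 {R A P : Type*} [CommRing R] [NonUnitalNonAssocCommRing A]
    [Module R A] [SMulCommClass R A A] [IsScalarTower R A A]
    (col : P → P → Prop) (third : P → P → P)
    (hF : IsFischer col third)
    (e : Module.Basis P R A) (hM : IsNilMatsuo R col third ⇑e)
    (x : P) :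
    LinearMap.mulLeft R (e x) ∘ₗ LinearMap.mulLeft R (e x) = 0 :=
  e.ext fun y => hM.mul_mul_left_eq_zero hF.toIsPTS x y
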